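/- Under the parameterized Bellman setting (finite S, A, A† of ℓ1 diameter at most 1; γ ∈ [0,1); r̄ and P̄ jointly d_r- and d_P-Lipschitz in (s, π) as measured by ‖s − s′‖₁ + ‖π − π′‖₁; γ d_P / 2 < 1; Q*_π the unique fixed point of T_π), define for each π ∈ Δ(A†) and s ∈ S the vector q_{π, s} ∈ ℝ^A by q_{π, s}(a) = r̄(s, a, π) + γ ∑_{s′ ∈ S} Q*_π(s′) P̄(s′|s, a, π). Set d_Q = d_r / (1 − γ d_P / 2) and d₀ = (d_r + γ d_P d_Q / 2) / (1 − γ). Then for all π₁, π₂ ∈ Δ(A†) and all s ∈ S, ‖q_{π₁, s} − q_{π₂, s}‖_∞ ≤ (d_r + γ d₀ + γ d_P d_Q / 2) ‖π₁ − π₂‖₁. -/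

import Mathlib

/-- The probability simplex over a finite subset `A` of a type, as functions. -/
def simplexOn {U : Type*} (A : Finset U) : Set (U → ℝ) :=
  {p | (∀ a ∈ A, 0 ≤ p a) ∧ ∑ a ∈ A, p a = 1}

/-- Bellman optimality operator of a discounted MDP with finite state set `S`,
finite action set `A`, reward `rbar` and transition kernel `Pbar`. -/
noncomputable def bellman {V W : Type*} [NormedAddCommGroup V] [NormedAddCommGroup W]
    (S : Finset V) (A : Finset W) (hA : A.Nonempty) (γ : ℝ)
    (rbar : V → W → ℝ) (Pbar : V → W → V → ℝ) (Q : V → ℝ) : V → ℝ :=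
  fun s => A.sup' hA (fun a => rbar s a + γ * ∑ s' ∈ S, Q s' * Pbar s a s')

lemma abs_sup'_sub_sup'_le' {W : Type*} (A : Finset W) (hA : A.Nonempty)
    (f g : W → ℝ) (K : ℝ) (h : ∀ a ∈ A, |f a - g a| ≤ K) :
    |A.sup' hA f - A.sup' hA g| ≤ K := by
  rw [abs_sub_le_iff]
  constructor
  · obtain ⟨a, ha, hfa⟩ := A.exists_mem_eq_sup' hA f
    rw [hfa]
    have h1 := A.le_sup' g ha
    have h2 := (abs_le.mp (h a ha)).2
    linarith
  · obtain ⟨a, ha, hga⟩ := A.exists_mem_eq_sup' hA g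
    rw [hga]
    have h1 := A.le_sup' f ha
    have h2 := (abs_le.mp (h a ha)).1
    linarith

lemma span_sum_bound' {V : Type*} (S : Finset V) (hS : S.Nonempty)
    (f p₁ p₂ : V → ℝ) (K : ℝ)
    (hK : ∀ s₁ ∈ S, ∀ s₂ ∈ S, |f s₁ - f s₂| ≤ K)
    (hsum : ∑ s ∈ S, p₁ s = ∑ s ∈ S, p₂ s) :
    |∑ s ∈ S, f s * (p₁ s - p₂ s)| ≤ K / 2 * ∑ s ∈ S, |p₁ s - p₂ s| := by
  set c := (S.sup' hS f + S.inf' hS f) / 2 with hc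
  have hfc : ∀ s ∈ S, |f s - c| ≤ K / 2 := by
    intro s hs
    obtain ⟨a, ha, hfa⟩ := S.exists_mem_eq_sup' hS f
    obtain ⟨b, hb, hfb⟩ := S.exists_mem_eq_inf' hS f
    have h1 : f s ≤ S.sup' hS f := S.le_sup' f hs
    have h2 : S.inf' hS f ≤ f s := S.inf'_le f hs
    have h3 : S.sup' hS f - S.inf' hS f ≤ K := by
      rw [hfa, hfb]
      exact (le_abs_self _).trans (hK a ha b hb)
    rw [abs_le]
    constructor <;> simp only [hc] <;> linarith
  have key : ∑ s ∈ S, f s * (p₁ s - p₂ s) = ∑ s ∈ S, (f s - c) * (p₁ s - p₂ s) := by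
    have hz : ∑ s ∈ S, (p₁ s - p₂ s) = 0 := by
      rw [Finset.sum_sub_distrib, hsum, sub_self]
    have : ∑ s ∈ S, (f s - c) * (p₁ s - p₂ s)
        = ∑ s ∈ S, f s * (p₁ s - p₂ s) - c * ∑ s ∈ S, (p₁ s - p₂ s) := by
      rw [Finset.mul_sum, ← Finset.sum_sub_distrib]
      exact Finset.sum_congr rfl (fun s _ => by ring)
    rw [this, hz, mul_zero, sub_zero]
  rw [key, Finset.mul_sum]
  refine (Finset.abs_sum_le_sum_abs _ _).trans (Finset.sum_le_sum ?_)
  intro s hs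
  rw [abs_mul]
  exact mul_le_mul_of_nonneg_right (hfc s hs) (abs_nonneg _)

/-- Lipschitz dependence of the Q-value vector `q_{π,s}` on the opponent's policy:
with `d_Q = d_r / (1 − γ d_P / 2)` and `d₀ = (d_r + γ d_P d_Q / 2)/(1 − γ)`,
`‖q_{π₁,s} − q_{π₂,s}‖_∞ ≤ (d_r + γ d₀ + γ d_P d_Q / 2) ‖π₁ − π₂‖₁`
for all `π₁, π₂ ∈ Δ(A†)` and `s ∈ S`. -/
theorem qvector_lipschitz_in_policy
    {V W U : Type*} [NormedAddCommGroup V] [NormedAddCommGroup W] [NormedAddCommGroup U]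
    (S : Finset V) (A : Finset W) (Adag : Finset U)
    (hS : S.Nonempty) (hA : A.Nonempty) (hAdag : Adag.Nonempty)
    (hSdiam : ∀ s₁ ∈ S, ∀ s₂ ∈ S, ‖s₁ - s₂‖ ≤ 1)
    (hAdiam : ∀ a₁ ∈ A, ∀ a₂ ∈ A, ‖a₁ - a₂‖ ≤ 1)
    (hAdagdiam : ∀ b₁ ∈ Adag, ∀ b₂ ∈ Adag, ‖b₁ - b₂‖ ≤ 1)
    (γ : ℝ) (hγ0 : 0 ≤ γ) (hγ1 : γ < 1)
    (d_r d_P : ℝ) (hdr : 0 ≤ d_r) (hdP : 0 ≤ d_P) (hγdP : γ * d_P / 2 < 1)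
    (rbar : V → W → (U → ℝ) → ℝ) (Pbar : V → W → (U → ℝ) → V → ℝ)
    (hr : ∀ a ∈ A, ∀ s₁ ∈ S, ∀ s₂ ∈ S, ∀ π₁ ∈ simplexOn Adag, ∀ π₂ ∈ simplexOn Adag,
      |rbar s₁ a π₁ - rbar s₂ a π₂|
        ≤ d_r * (‖s₁ - s₂‖ + ∑ b ∈ Adag, |π₁ b - π₂ b|))
    (hPmem : ∀ s ∈ S, ∀ a ∈ A, ∀ π ∈ simplexOn Adag,
      (∀ s' ∈ S, 0 ≤ Pbar s a π s') ∧ ∑ s' ∈ S, Pbar s a π s' = 1)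
    (hPlip : ∀ a ∈ A, ∀ s₁ ∈ S, ∀ s₂ ∈ S, ∀ π₁ ∈ simplexOn Adag, ∀ π₂ ∈ simplexOn Adag,
      ∑ s' ∈ S, |Pbar s₁ a π₁ s' - Pbar s₂ a π₂ s'|
        ≤ d_P * (‖s₁ - s₂‖ + ∑ b ∈ Adag, |π₁ b - π₂ b|))
    (Qstar : (U → ℝ) → V → ℝ)
    (hQ : ∀ π ∈ simplexOn Adag, ∀ s,
      Qstar π s
        = bellman S A hA γ (fun s a => rbar s a π) (fun s a => Pbar s a π)
            (Qstar π) s)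
    (d_Q d₀ : ℝ)
    (hdQ : d_Q = d_r / (1 - γ * d_P / 2))
    (hd₀ : d₀ = (d_r + γ * d_P * d_Q / 2) / (1 - γ)) :
    ∀ π₁ ∈ simplexOn Adag, ∀ π₂ ∈ simplexOn Adag, ∀ s ∈ S,
      A.sup' hA (fun a =>
          |(rbar s a π₁ + γ * ∑ s' ∈ S, Qstar π₁ s' * Pbar s a π₁ s')
            - (rbar s a π₂ + γ * ∑ s' ∈ S, Qstar π₂ s' * Pbar s a π₂ s')|)
        ≤ (d_r + γ * d₀ + γ * d_P * d_Q / 2) * ∑ b ∈ Adag, |π₁ b - π₂ b| := by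
  have h2 : (0:ℝ) < 1 - γ * d_P / 2 := by linarith
  have hdQ0 : 0 ≤ d_Q := by rw [hdQ]; positivity
  have h1γ : (0:ℝ) < 1 - γ := by linarith
  have hd₀0 : 0 ≤ d₀ := by rw [hd₀]; positivity
  -- per-action bound
  have perA : ∀ ρ₁ ∈ simplexOn Adag, ∀ ρ₂ ∈ simplexOn Adag, ∀ t₁ ∈ S, ∀ t₂ ∈ S,
      ∀ a ∈ A, ∀ K M' : ℝ,
      (∀ u₁ ∈ S, ∀ u₂ ∈ S, |Qstar ρ₂ u₁ - Qstar ρ₂ u₂| ≤ K) →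
      (∀ u ∈ S, |Qstar ρ₁ u - Qstar ρ₂ u| ≤ M') →
      |(rbar t₁ a ρ₁ + γ * ∑ s' ∈ S, Qstar ρ₁ s' * Pbar t₁ a ρ₁ s')
        - (rbar t₂ a ρ₂ + γ * ∑ s' ∈ S, Qstar ρ₂ s' * Pbar t₂ a ρ₂ s')|
      ≤ d_r * (‖t₁ - t₂‖ + ∑ b ∈ Adag, |ρ₁ b - ρ₂ b|) + γ * M'
          + γ * (K / 2) * (d_P * (‖t₁ - t₂‖ + ∑ b ∈ Adag, |ρ₁ b - ρ₂ b|)) := by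
    intro ρ₁ hρ₁ ρ₂ hρ₂ t₁ ht₁ t₂ ht₂ a ha K M' hK hM'
    have hK0 : 0 ≤ K := by
      obtain ⟨u, hu⟩ := hS
      simpa using hK u hu u hu
    have hr1 := hr a ha t₁ ht₁ t₂ ht₂ ρ₁ hρ₁ ρ₂ hρ₂
    have hP1 := hPlip a ha t₁ ht₁ t₂ ht₂ ρ₁ hρ₁ ρ₂ hρ₂
    obtain ⟨hP1pos, hP1sum⟩ := hPmem t₁ ht₁ a ha ρ₁ hρ₁
    obtain ⟨hP2pos, hP2sum⟩ := hPmem t₂ ht₂ a ha ρ₂ hρ₂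
    have split : ∑ s' ∈ S, Qstar ρ₁ s' * Pbar t₁ a ρ₁ s'
          - ∑ s' ∈ S, Qstar ρ₂ s' * Pbar t₂ a ρ₂ s'
        = (∑ s' ∈ S, (Qstar ρ₁ s' - Qstar ρ₂ s') * Pbar t₁ a ρ₁ s')
          + ∑ s' ∈ S, Qstar ρ₂ s' * (Pbar t₁ a ρ₁ s' - Pbar t₂ a ρ₂ s') := by
      rw [← Finset.sum_add_distrib, ← Finset.sum_sub_distrib]
      exact Finset.sum_congr rfl (fun s _ => by ring)
    have b1 : |∑ s' ∈ S, (Qstar ρ₁ s' - Qstar ρ₂ s') * Pbar t₁ a ρ₁ s'| ≤ M' := by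
      calc |∑ s' ∈ S, (Qstar ρ₁ s' - Qstar ρ₂ s') * Pbar t₁ a ρ₁ s'|
          ≤ ∑ s' ∈ S, |(Qstar ρ₁ s' - Qstar ρ₂ s') * Pbar t₁ a ρ₁ s'| :=
            Finset.abs_sum_le_sum_abs _ _
        _ ≤ ∑ s' ∈ S, M' * Pbar t₁ a ρ₁ s' := by
            refine Finset.sum_le_sum fun s' hs' => ?_
            rw [abs_mul, abs_of_nonneg (hP1pos s' hs')]
            exact mul_le_mul_of_nonneg_right (hM' s' hs') (hP1pos s' hs')
        _ = M' := by rw [← Finset.mul_sum, hP1sum, mul_one]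
    have b2 : |∑ s' ∈ S, Qstar ρ₂ s' * (Pbar t₁ a ρ₁ s' - Pbar t₂ a ρ₂ s')|
        ≤ K / 2 * (d_P * (‖t₁ - t₂‖ + ∑ b ∈ Adag, |ρ₁ b - ρ₂ b|)) := by
      have h := span_sum_bound' S hS (Qstar ρ₂) (Pbar t₁ a ρ₁) (Pbar t₂ a ρ₂) K hK
        (by rw [hP1sum, hP2sum])
      exact h.trans (mul_le_mul_of_nonneg_left hP1 (by positivity))
    have heq : (rbar t₁ a ρ₁ + γ * ∑ s' ∈ S, Qstar ρ₁ s' * Pbar t₁ a ρ₁ s')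
          - (rbar t₂ a ρ₂ + γ * ∑ s' ∈ S, Qstar ρ₂ s' * Pbar t₂ a ρ₂ s')
        = (rbar t₁ a ρ₁ - rbar t₂ a ρ₂)
          + γ * ((∑ s' ∈ S, (Qstar ρ₁ s' - Qstar ρ₂ s') * Pbar t₁ a ρ₁ s')
            + ∑ s' ∈ S, Qstar ρ₂ s' * (Pbar t₁ a ρ₁ s' - Pbar t₂ a ρ₂ s')) := by
      rw [← split]; ring
    rw [heq]
    have habs : |(rbar t₁ a ρ₁ - rbar t₂ a ρ₂)
          + γ * ((∑ s' ∈ S, (Qstar ρ₁ s' - Qstar ρ₂ s') * Pbar t₁ a ρ₁ s')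
            + ∑ s' ∈ S, Qstar ρ₂ s' * (Pbar t₁ a ρ₁ s' - Pbar t₂ a ρ₂ s'))|
        ≤ |rbar t₁ a ρ₁ - rbar t₂ a ρ₂|
          + γ * (|∑ s' ∈ S, (Qstar ρ₁ s' - Qstar ρ₂ s') * Pbar t₁ a ρ₁ s'|
            + |∑ s' ∈ S, Qstar ρ₂ s' * (Pbar t₁ a ρ₁ s' - Pbar t₂ a ρ₂ s')|) := by
      refine (abs_add_le _ _).trans ?_
      rw [abs_mul, abs_of_nonneg hγ0]
      exact add_le_add_right (mul_le_mul_of_nonneg_left (abs_add_le _ _) hγ0) _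
    refine habs.trans ?_
    nlinarith [mul_le_mul_of_nonneg_left b1 hγ0, mul_le_mul_of_nonneg_left b2 hγ0]
  -- span bound on Qstar π over S
  have hspan : ∀ π ∈ simplexOn Adag, ∀ s₁ ∈ S, ∀ s₂ ∈ S,
      |Qstar π s₁ - Qstar π s₂| ≤ d_Q := by
    intro π hπ
    have hSS : (S ×ˢ S).Nonempty := hS.product hS
    set D := (S ×ˢ S).sup' hSS (fun p => |Qstar π p.1 - Qstar π p.2|) with hD
    have hmemD : ∀ s₁ ∈ S, ∀ s₂ ∈ S, |Qstar π s₁ - Qstar π s₂| ≤ D := by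
      intro s₁ h₁ s₂ h₂
      have hmem : (s₁, s₂) ∈ S ×ˢ S := Finset.mem_product.mpr ⟨h₁, h₂⟩
      exact Finset.le_sup' (fun p => |Qstar π p.1 - Qstar π p.2|) hmem
    have hD0 : 0 ≤ D := by
      obtain ⟨u, hu⟩ := hS
      simpa using hmemD u hu u hu
    have hDle : D ≤ d_r + γ * (D / 2) * d_P := by
      obtain ⟨p, hp, hpe⟩ := Finset.exists_mem_eq_sup' hSS
        (fun p => |Qstar π p.1 - Qstar π p.2|)
      obtain ⟨h₁, h₂⟩ := Finset.mem_product.mp hp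
      have hx : ‖p.1 - p.2‖ ≤ 1 := hSdiam p.1 h₁ p.2 h₂
      have hx0 : (0:ℝ) ≤ ‖p.1 - p.2‖ := norm_nonneg _
      have hδ0 : ∑ b ∈ Adag, |π b - π b| = 0 := by simp
      calc D = |Qstar π p.1 - Qstar π p.2| := by rw [hD, hpe]
        _ = |bellman S A hA γ (fun s a => rbar s a π) (fun s a => Pbar s a π) (Qstar π) p.1
              - bellman S A hA γ (fun s a => rbar s a π) (fun s a => Pbar s a π) (Qstar π) p.2| := by
            rw [← hQ π hπ p.1, ← hQ π hπ p.2]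
        _ ≤ d_r * (‖p.1 - p.2‖ + ∑ b ∈ Adag, |π b - π b|) + γ * 0
              + γ * (D / 2) * (d_P * (‖p.1 - p.2‖ + ∑ b ∈ Adag, |π b - π b|)) := by
            unfold bellman
            refine abs_sup'_sub_sup'_le' A hA _ _ _ ?_
            intro a ha
            exact perA π hπ π hπ p.1 h₁ p.2 h₂ a ha D 0 hmemD (fun u hu => by simp)
        _ ≤ d_r + γ * (D / 2) * d_P := by
            rw [hδ0]
            nlinarith [mul_nonneg (mul_nonneg hγ0 (by linarith : (0:ℝ) ≤ D / 2)) hdP]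
    have hDQ : D ≤ d_Q := by
      rw [hdQ, le_div_iff₀ h2]
      nlinarith
    intro s₁ h₁ s₂ h₂
    exact (hmemD s₁ h₁ s₂ h₂).trans hDQ
  -- main argument
  intro π₁ hπ₁ π₂ hπ₂ s hs
  set δ := ∑ b ∈ Adag, |π₁ b - π₂ b| with hδ
  have hδ0 : 0 ≤ δ := Finset.sum_nonneg (fun _ _ => abs_nonneg _)
  set M := S.sup' hS (fun u => |Qstar π₁ u - Qstar π₂ u|) with hM
  have hmemM : ∀ u ∈ S, |Qstar π₁ u - Qstar π₂ u| ≤ M := fun u hu =>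
    Finset.le_sup' (f := fun u => |Qstar π₁ u - Qstar π₂ u|) hu
  have hM0 : 0 ≤ M := by
    obtain ⟨u, hu⟩ := hS
    exact (abs_nonneg _).trans (hmemM u hu)
  have hMle : M ≤ d_r * δ + γ * M + γ * (d_Q / 2) * (d_P * δ) := by
    obtain ⟨u, hu, hue⟩ := Finset.exists_mem_eq_sup' hS
      (fun u => |Qstar π₁ u - Qstar π₂ u|)
    calc M = |Qstar π₁ u - Qstar π₂ u| := by rw [hM, hue]
      _ = |bellman S A hA γ (fun s a => rbar s a π₁) (fun s a => Pbar s a π₁) (Qstar π₁) u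
            - bellman S A hA γ (fun s a => rbar s a π₂) (fun s a => Pbar s a π₂) (Qstar π₂) u| := by
          rw [← hQ π₁ hπ₁ u, ← hQ π₂ hπ₂ u]
      _ ≤ d_r * (‖u - u‖ + δ) + γ * M + γ * (d_Q / 2) * (d_P * (‖u - u‖ + δ)) := by
          unfold bellman
          refine abs_sup'_sub_sup'_le' A hA _ _ _ ?_
          intro a ha
          have h := perA π₁ hπ₁ π₂ hπ₂ u hu u hu a ha d_Q M (hspan π₂ hπ₂) hmemM
          rw [← hδ] at h
          exact h
      _ = d_r * δ + γ * M + γ * (d_Q / 2) * (d_P * δ) := by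
          rw [sub_self, norm_zero, zero_add]
  have hMd₀ : M ≤ d₀ * δ := by
    rw [hd₀, div_mul_eq_mul_div, le_div_iff₀ h1γ]
    nlinarith
  refine Finset.sup'_le hA _ fun a ha => ?_
  have h := perA π₁ hπ₁ π₂ hπ₂ s hs s hs a ha d_Q M (hspan π₂ hπ₂) hmemM
  rw [← hδ] at h
  rw [sub_self, norm_zero, zero_add] at h
  refine h.trans ?_
  nlinarith [mul_le_mul_of_nonneg_left hMd₀ hγ0]
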